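/- In the ensemble-selection problem with strictly positive scores, if x is a score-optimal solution among feasible 0-1 vectors with at most k ones, and x violates the average-mass constraint, then the optimal feasible solution satisfying the average constraint is still optimal for the ILP obtained by adding the single constraint ∑_{i ∈ supp(x)} x_i ≤ |supp(x)| − 1 (excluding exactly the solution x). -/

import Mathlib

/-! Since every score is positive, a feasible selection containing the score-optimal `x` cannot
be strictly larger than `x`. Hence for feasible `y`, `y ∩ x = x` (the only way to violate the
cut) forces `y = x`. The constrained optimum `z` is not `x`, as `x` violates the average
constraint, so `z` survives the cut. -/

namespace Finset

variable {α M : Type*}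

lemma card_inter_lt_card_right_iff [DecidableEq α] {s t : Finset α} :
    #(s ∩ t) < #t ↔ ¬t ⊆ s := by
  constructor
  · intro h hts
    rw [inter_eq_right.2 hts] at h
    exact h.false
  · intro hts
    exact card_lt_card (inter_subset_right.ssubset_of_ne (mt inter_eq_right.1 hts))

lemma eq_of_subset_of_sum_le [AddCommMonoid M] [PartialOrder M] [IsOrderedCancelAddMonoid M]
    {f : α → M} (hf : ∀ i, 0 < f i) {s t : Finset α} (hst : s ⊆ t)
    (hsum : ∑ i ∈ t, f i ≤ ∑ i ∈ s, f i) : t = s := by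
  by_contra hne
  obtain ⟨i, hit, his⟩ := exists_of_ssubset (hst.ssubset_of_ne (Ne.symm hne))
  exact (sum_lt_sum_of_subset hst hit his (hf i) fun j _ _ ↦ (hf j).le).not_ge hsum

end Finset

open Finset

lemma card_inter_le_card_sub_one_iff_ne_of_forall_sum_le {ι M : Type*} [DecidableEq ι]
    [AddCommMonoid M] [PartialOrder M] [IsOrderedCancelAddMonoid M]
    {s : ι → M} (hs : ∀ i, 0 < s i) {Feasible : Finset ι → Prop} {x y : Finset ι}
    (hxne : x.Nonempty) (hxopt : ∀ y, Feasible y → ∑ i ∈ y, s i ≤ ∑ i ∈ x, s i)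
    (hy : Feasible y) : #(y ∩ x) ≤ #x - 1 ↔ y ≠ x := by
  rw [Nat.le_sub_one_iff_lt hxne.card_pos, card_inter_lt_card_right_iff]
  constructor
  · rintro hxy rfl
    exact hxy subset_rfl
  · exact fun hne hxy ↦ hne (eq_of_subset_of_sum_le hs hxy (hxopt y hy))

theorem cut_excludes_exactly_x_and_preserves_optimum_general
    {ι : Type*} [DecidableEq ι]
    (s : ι → ℝ) (hs : ∀ i, 0 < s i)
    (Feasible : Finset ι → Prop)
    (AvgOK : Finset ι → Prop)
    (x : Finset ι) (hxne : x.Nonempty)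
    (hxopt : ∀ y : Finset ι, Feasible y → ∑ i ∈ y, s i ≤ ∑ i ∈ x, s i)
    (hxbad : ¬AvgOK x)
    (z : Finset ι) (hz : Feasible z) (hzavg : AvgOK z)
    (hzopt : ∀ y : Finset ι, Feasible y → AvgOK y → ∑ i ∈ y, s i ≤ ∑ i ∈ z, s i) :
    (∀ y : Finset ι, Feasible y → ((y ∩ x).card ≤ x.card - 1 ↔ y ≠ x)) ∧
    (Feasible z ∧ (z ∩ x).card ≤ x.card - 1 ∧
      ∀ y : Finset ι, Feasible y → (y ∩ x).card ≤ x.card - 1 → AvgOK y →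
        ∑ i ∈ y, s i ≤ ∑ i ∈ z, s i) := by
  have cut_iff_ne : ∀ y, Feasible y → ((y ∩ x).card ≤ x.card - 1 ↔ y ≠ x) :=
    fun _ hy ↦ card_inter_le_card_sub_one_iff_ne_of_forall_sum_le hs hxne hxopt hy
  have hzx : z ≠ x := by
    rintro rfl
    exact hxbad hzavg
  exact ⟨cut_iff_ne, hz, (cut_iff_ne z hz).2 hzx, fun y hy _ hyavg ↦ hzopt y hy hyavg⟩

/-- Suppose `x` is score-optimal among feasible selections (conflict-free, at most `k` ships)
with all scores strictly positive, and `x` violates the average-mass constraint. Then the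
cardinality cut `∑_{i ∈ supp x} x_i ≤ |supp x| − 1` excludes exactly the solution `x` from the
feasible set, and consequently a solution `z` that is optimal among feasible selections
satisfying the average constraint remains optimal for the ILP with the added cut. -/
theorem cut_excludes_exactly_x_and_preserves_optimum
    {ι : Type*} [Fintype ι] [DecidableEq ι]
    (s m : ι → ℝ) (hs : ∀ i, 0 < s i)
    (Conflict : ι → ι → Prop)
    (k : ℕ)
    (Feasible : Finset ι → Prop)
    (hFeas : ∀ I : Finset ι,
      Feasible I ↔ ((∀ i ∈ I, ∀ j ∈ I, i ≠ j → ¬Conflict i j) ∧ I.card ≤ k))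
    (AvgOK : Finset ι → Prop)
    (c : ℕ → ℝ)
    (hAvg : ∀ I : Finset ι, AvgOK I ↔ c I.card ≤ (∑ i ∈ I, m i) / I.card)
    (x : Finset ι) (hxne : x.Nonempty) (hx : Feasible x)
    (hxopt : ∀ y : Finset ι, Feasible y → ∑ i ∈ y, s i ≤ ∑ i ∈ x, s i)
    (hxbad : ¬AvgOK x)
    (z : Finset ι) (hz : Feasible z) (hzavg : AvgOK z)
    (hzopt : ∀ y : Finset ι, Feasible y → AvgOK y → ∑ i ∈ y, s i ≤ ∑ i ∈ z, s i) :
    (∀ y : Finset ι, Feasible y → ((y ∩ x).card ≤ x.card - 1 ↔ y ≠ x)) ∧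
    (Feasible z ∧ (z ∩ x).card ≤ x.card - 1 ∧
      ∀ y : Finset ι, Feasible y → (y ∩ x).card ≤ x.card - 1 → AvgOK y →
        ∑ i ∈ y, s i ≤ ∑ i ∈ z, s i) :=
  cut_excludes_exactly_x_and_preserves_optimum_general s hs Feasible AvgOK x hxne hxopt hxbad z hz
    hzavg hzopt
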